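/- arXiv:2510.22377 — 2 statements merged into one kernel-verified Lean document; each statement's English description precedes it below -/
import Mathlib

section
/- A right-infinite binary word w : ℕ → {a,b} is Sturmian (balanced and aperiodic) if and only if its complexity function satisfies p(w,n) = n + 1 for every n ≥ 1. -/
namespace StringBricks

def IsFactor (w : ℕ → Bool) (u : List Bool) : Prop :=
  ∃ i : ℕ, ∀ j : Fin u.length, w (i + j) = u.get j

def BalancedWord (w : ℕ → Bool) : Prop :=
  ∀ u v : List Bool, IsFactor w u → IsFactor w v → u.length = v.length →
    |(u.count true : ℤ) - (v.count true : ℤ)| ≤ 1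

def EventuallyPeriodic (w : ℕ → Bool) : Prop :=
  ∃ N p : ℕ, 1 ≤ p ∧ ∀ n : ℕ, N ≤ n → w (n + p) = w n

def SturmianWord (w : ℕ → Bool) : Prop :=
  BalancedWord w ∧ ¬ EventuallyPeriodic w

noncomputable def complexity (w : ℕ → Bool) (n : ℕ) : ℕ :=
  Set.ncard {u : List Bool | u.length = n ∧ IsFactor w u}

end StringBricks

/-!
Counting the right extensions of factors gives `p(n+1) = p(n) + s(n)`, where `s(n)` is the number
of right special factors of length `n` (those `x` with both `x0` and `x1` factors). If no factor of
length `n` is right special, each window of length `n` determines the next letter and `w` is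
eventually periodic; so `s(n) ≥ 1` for aperiodic words. In a balanced word, two distinct right
special factors of equal length, ending in `0s` and `1s`, would give the factors `0s0` and `1s1`;
so `s(n) ≤ 1`.

Conversely, let `p(n) = n + 1`. Then `w` is aperiodic, has a unique right special factor of each
length, and is recurrent, since every suffix of `w` is aperiodic and so already contains all
`n + 1` factors of length `n`. If `w` were unbalanced, a shortest unbalanced pair would be
`1z1`, `0z0` with `z` a palindrome. Uniqueness at length `|z| + 1` rules out one of `1z0`, `0z1`,
say `1z0`, so an occurrence of `z` preceded by `1` is followed by `1`. As `z` is the only right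
special factor of length `|z|`, the windows between two consecutive occurrences of `z` are
distinct, so consecutive occurrences are at most `|z| + 1` apart; since `z` is a palindrome, the
letter after one occurrence is then the letter before the next. Hence from some point on every
occurrence of `z` is preceded by `1`, contradicting the recurrence of `0z0`.
-/

theorem List.exists_eq_append_cons_of_ne {α : Type*} :
    ∀ {x y : List α}, x.length = y.length → x ≠ y →
      ∃ p a b s t, a ≠ b ∧ x = p ++ a :: s ∧ y = p ++ b :: t
  | [], [], _, h => absurd rfl h
  | [], _ :: _, hl, _ | _ :: _, [], hl, _ => by simp at hl
  | a :: x, b :: y, hl, h => by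
    by_cases hab : a = b
    · subst hab
      obtain ⟨p, c, d, s, t, hcd, rfl, rfl⟩ :=
        exists_eq_append_cons_of_ne (by simpa using hl) (by simpa using h)
      exact ⟨a :: p, c, d, s, t, hcd, rfl, rfl⟩
    · exact ⟨[], a, b, x, y, hab, rfl, rfl⟩

namespace StringBricks

section Language

variable {L : Set (List Bool)}

def BalancedBelow (L : Set (List Bool)) (n : ℕ) : Prop :=
  ∀ u ∈ L, ∀ v ∈ L, u.length = v.length → u.length < n → u.count true ≤ v.count true + 1

theorem exists_frame_of_balancedBelow (hL : ∀ u ∈ L, ∀ v, v <:+: u → v ∈ L)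
    {u v : List Bool} (hu : u ∈ L) (hv : v ∈ L) (hl : u.length = v.length)
    (hcount : v.count true + 2 ≤ u.count true) (hmin : BalancedBelow L u.length) :
    ∃ x y, u = true :: (x ++ [true]) ∧ v = false :: (y ++ [false]) ∧
      x.count true = y.count true := by
  obtain ⟨a, u', rfl⟩ := List.exists_cons_of_ne_nil (l := u) (by rintro rfl; simp at hcount)
  obtain ⟨b, v', rfl⟩ := List.exists_cons_of_ne_nil (l := v) (by rintro rfl; simp at hl)
  have htail := hmin u' (hL _ hu _ (List.suffix_cons a u').isInfix) v'
    (hL _ hv _ (List.suffix_cons b v').isInfix) (by simpa using hl) (by simp)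
  obtain rfl | ⟨x, c, rfl⟩ := u'.eq_nil_or_concat
  · cases a <;> cases b <;> simp at hcount
  obtain rfl | ⟨y, d, rfl⟩ := v'.eq_nil_or_concat
  · simp at hl
  simp only [List.concat_eq_append] at *
  have hinit := hmin (a :: x) (hL _ hu _ ⟨[], [c], by simp⟩) (b :: y)
    (hL _ hv _ ⟨[], [d], by simp⟩) (by simpa using hl) (by simp)
  refine ⟨x, y, ?_⟩
  cases a <;> cases b <;> cases c <;> cases d <;> simp at hcount htail hinit ⊢ <;> omega

theorem eq_of_balancedBelow (hL : ∀ u ∈ L, ∀ v, v <:+: u → v ∈ L) {x y : List Bool}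
    (hx : true :: (x ++ [true]) ∈ L) (hy : false :: (y ++ [false]) ∈ L)
    (hl : x.length = y.length) (hcount : x.count true = y.count true)
    (hmin : BalancedBelow L (x.length + 2)) : x = y := by
  by_contra hne
  obtain ⟨p, a, b, s, t, hab, rfl, rfl⟩ := List.exists_eq_append_cons_of_ne hl hne
  simp only [List.length_append, List.length_cons] at hl
  cases a <;> cases b <;> simp only [ne_eq, not_true_eq_false] at hab
  · have := hmin (s ++ [true]) (hL _ hx _ ⟨true :: (p ++ [false]), [], by simp⟩) (t ++ [false])
      (hL _ hy _ ⟨false :: (p ++ [true]), [], by simp⟩) (by simp; omega) (by simp; omega)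
    simp at this hcount
    omega
  · have := hmin (true :: (p ++ [true])) (hL _ hx _ ⟨[], s ++ [true], by simp⟩)
      (false :: (p ++ [false])) (hL _ hy _ ⟨[], t ++ [false], by simp⟩) (by simp) (by simp)
    simp at this

theorem palindrome_of_balancedBelow (hL : ∀ u ∈ L, ∀ v, v <:+: u → v ∈ L) {z : List Bool}
    (h1 : true :: (z ++ [true]) ∈ L) (h0 : false :: (z ++ [false]) ∈ L)
    (hmin : BalancedBelow L (z.length + 2)) : z.Palindrome := by
  rw [List.Palindrome.iff_reverse_eq]
  by_contra hne
  obtain ⟨p, a, b, s, t, hab, hz, hzr⟩ :=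
    List.exists_eq_append_cons_of_ne (x := z) (y := z.reverse) (by simp) (Ne.symm hne)
  have hz' : z = t.reverse ++ b :: p.reverse := by
    rw [← List.reverse_reverse z, hzr]; simp
  have hlen : p.length < z.length := by rw [hz]; simp
  cases a <;> cases b <;> simp only [ne_eq, not_true_eq_false] at hab
  · have := hmin (true :: (p.reverse ++ [true]))
      (hL _ h1 _ ⟨true :: t.reverse, [], by rw [hz']; simp⟩)
      (false :: (p ++ [false])) (hL _ h0 _ ⟨[], s ++ [false], by rw [hz]; simp⟩) (by simp)
      (by simpa using hlen)
    simp at this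
  · have := hmin (true :: (p ++ [true])) (hL _ h1 _ ⟨[], s ++ [true], by rw [hz]; simp⟩)
      (false :: (p.reverse ++ [false])) (hL _ h0 _ ⟨false :: t.reverse, [], by rw [hz']; simp⟩)
      (by simp) (by simpa using hlen)
    simp at this

theorem exists_palindrome_of_unbalanced (hL : ∀ u ∈ L, ∀ v, v <:+: u → v ∈ L)
    (h : ∃ u ∈ L, ∃ v ∈ L, u.length = v.length ∧ v.count true + 2 ≤ u.count true) :
    ∃ z, z.Palindrome ∧ false :: (z ++ [false]) ∈ L ∧ true :: (z ++ [true]) ∈ L := by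
  classical
  have hex : ∃ n, ∃ u ∈ L, ∃ v ∈ L, u.length = n ∧ u.length = v.length ∧
      v.count true + 2 ≤ u.count true := by
    obtain ⟨u, hu, v, hv, h⟩ := h
    exact ⟨_, u, hu, v, hv, rfl, h⟩
  obtain ⟨u, hu, v, hv, hn, hl, hcount⟩ := Nat.find_spec hex
  have hmin : BalancedBelow L u.length := by
    intro u' hu' v' hv' hl' hlt
    by_contra hc
    exact Nat.find_min hex (hn ▸ hlt) ⟨u', hu', v', hv', rfl, hl', by omega⟩
  obtain ⟨x, y, rfl, rfl, hxy⟩ := exists_frame_of_balancedBelow hL hu hv hl hcount hmin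
  simp only [List.length_cons, List.length_append] at hl hmin
  obtain rfl := eq_of_balancedBelow hL hu hv (by omega) hxy hmin
  exact ⟨x, palindrome_of_balancedBelow hL hu hv hmin, hv, hu⟩

end Language

section Window

variable {w : ℕ → Bool} {u x : List Bool} {i j n : ℕ}

def window (w : ℕ → Bool) (i n : ℕ) : List Bool := List.ofFn fun k : Fin n => w (i + k)

@[simp] theorem length_window : (window w i n).length = n := by simp [window]

theorem window_succ : window w i (n + 1) = w i :: window w (i + 1) n := by
  simp [window, List.ofFn_succ, add_assoc, add_comm 1]

theorem window_succ' : window w i (n + 1) = window w i n ++ [w (i + n)] := by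
  simp only [window, List.ofFn_succ', List.concat_eq_append, Fin.val_castSucc, Fin.val_last]

theorem window_add_two :
    window w i (n + 2) = w i :: (window w (i + 1) n ++ [w (i + 1 + n)]) := by
  rw [window_succ, window_succ']

theorem window_eq_window_iff :
    window w i n = window w j n ↔ ∀ k < n, w (i + k) = w (j + k) := by
  simp [window, List.ofFn_inj, funext_iff, Fin.forall_iff]

theorem apply_add_eq_getElem (h : window w i u.length = u) {k : ℕ} (hk : k < u.length) :
    w (i + k) = u[k] := by
  simpa [window, hk] using congrArg (·[k]?) h

theorem isFactor_iff : IsFactor w u ↔ ∃ i, window w i u.length = u := by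
  simp [IsFactor, window, List.ext_getElem_iff, Fin.forall_iff]

theorem isFactor_window : IsFactor w (window w i n) :=
  isFactor_iff.2 ⟨i, by simp⟩

theorem IsFactor.of_infix (hu : IsFactor w u) (h : x <:+: u) : IsFactor w x := by
  obtain ⟨s, t, rfl⟩ := h
  obtain ⟨i, hi⟩ := isFactor_iff.1 hu
  refine isFactor_iff.2 ⟨i + s.length, List.ext_getElem (by simp) fun k hk _ => ?_⟩
  simp only [length_window] at hk
  have := apply_add_eq_getElem hi (k := s.length + k) (by simp; omega)
  simpa [window, add_assoc, List.getElem_append_left, List.getElem_append_right, hk] using this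

theorem exists_isFactor_append (hx : IsFactor w x) : ∃ c, IsFactor w (x ++ [c]) := by
  obtain ⟨i, hi⟩ := isFactor_iff.1 hx
  refine ⟨w (i + x.length), ?_⟩
  have := isFactor_window (w := w) (i := i) (n := x.length + 1)
  rwa [window_succ', hi] at this

end Window

section Complexity

variable {w : ℕ → Bool} {x y : List Bool} {n : ℕ}

def factors (w : ℕ → Bool) (n : ℕ) : Set (List Bool) := {u | u.length = n ∧ IsFactor w u}

theorem finite_setOf_length_eq_and (n : ℕ) (p : List Bool → Prop) :
    {u : List Bool | u.length = n ∧ p u}.Finite :=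
  (List.finite_length_eq Bool n).subset fun _ h => h.1

theorem complexity_eq_ncard : complexity w n = (factors w n).ncard := rfl

theorem factors_zero : factors w 0 = {[]} := by
  ext u
  simp only [factors, Set.mem_ofPred_eq, Set.mem_singleton_iff, List.length_eq_zero_iff]
  exact ⟨And.left, fun h => ⟨h, isFactor_iff.2 ⟨0, by simp [h, window]⟩⟩⟩

theorem complexity_zero : complexity w 0 = 1 := by
  rw [complexity_eq_ncard, factors_zero, Set.ncard_singleton]

def IsRightSpecial (w : ℕ → Bool) (x : List Bool) : Prop :=
  IsFactor w (x ++ [false]) ∧ IsFactor w (x ++ [true])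

theorem IsRightSpecial.isFactor_append (h : IsRightSpecial w x) (c : Bool) :
    IsFactor w (x ++ [c]) := by
  cases c
  exacts [h.1, h.2]

def rightSpecialFactors (w : ℕ → Bool) (n : ℕ) : Set (List Bool) :=
  {x | x.length = n ∧ IsRightSpecial w x}

theorem complexity_succ :
    complexity w (n + 1) = complexity w n + (rightSpecialFactors w n).ncard := by
  set A : Bool → Set (List Bool) := fun c => {x | x.length = n ∧ IsFactor w (x ++ [c])}
  have hA : ∀ c, (A c).Finite := fun c => finite_setOf_length_eq_and n _
  have hsplit : factors w (n + 1) = (· ++ [false]) '' A false ∪ (· ++ [true]) '' A true := by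
    ext u
    constructor
    · rintro ⟨hu, hf⟩
      obtain rfl | ⟨x, c, rfl⟩ := u.eq_nil_or_concat
      · simp at hu
      simp only [List.concat_eq_append, List.length_append, List.length_singleton,
        Nat.add_right_cancel_iff] at hu hf ⊢
      cases c
      exacts [Or.inl ⟨x, ⟨hu, hf⟩, rfl⟩, Or.inr ⟨x, ⟨hu, hf⟩, rfl⟩]
    · rintro (⟨x, ⟨hx, hf⟩, rfl⟩ | ⟨x, ⟨hx, hf⟩, rfl⟩) <;> exact ⟨by simp [hx], hf⟩
  have hdisj : Disjoint ((· ++ [false]) '' A false) ((· ++ [true]) '' A true) := by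
    rw [Set.disjoint_left]
    rintro _ ⟨x, -, rfl⟩ ⟨y, -, h⟩
    simp at h
  have hunion : A false ∪ A true = factors w n := by
    ext x
    constructor
    · rintro (⟨hx, hf⟩ | ⟨hx, hf⟩) <;>
        exact ⟨hx, by simpa using hf.of_infix (List.prefix_append x _).isInfix⟩
    · rintro ⟨hx, hf⟩
      obtain ⟨c, hc⟩ := exists_isFactor_append hf
      cases c
      exacts [Or.inl ⟨hx, hc⟩, Or.inr ⟨hx, hc⟩]
  have hinter : A false ∩ A true = rightSpecialFactors w n := by
    ext x
    simp only [A, rightSpecialFactors, IsRightSpecial, Set.mem_inter_iff, Set.mem_ofPred_eq]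
    tauto
  rw [complexity_eq_ncard, complexity_eq_ncard, hsplit,
    Set.ncard_union_eq hdisj ((hA _).image _) ((hA _).image _),
    Set.ncard_image_of_injective _ (List.append_left_injective _),
    Set.ncard_image_of_injective _ (List.append_left_injective _),
    ← Set.ncard_union_add_ncard_inter _ _ (hA _) (hA _), hunion, hinter]

theorem apply_add_eq_of_window_eq {a b : ℕ} (h : window w a n = window w b n)
    (hs : ¬ IsRightSpecial w (window w a n)) : w (a + n) = w (b + n) := by
  have ha : IsFactor w (window w a n ++ [w (a + n)]) := window_succ' ▸ isFactor_window
  have hb : IsFactor w (window w a n ++ [w (b + n)]) := h ▸ window_succ' ▸ isFactor_window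
  by_contra hne
  apply hs
  cases hA : w (a + n) <;> cases hB : w (b + n) <;> simp_all [IsRightSpecial]

theorem window_add_eq_of_window_eq {a b K : ℕ} (h : window w a n = window w b n)
    (hs : ∀ k < K, ¬ IsRightSpecial w (window w (a + k) n)) :
    window w (a + K) n = window w (b + K) n := by
  induction K with
  | zero => simpa using h
  | succ K ih =>
    have hK := ih fun k hk => hs k (by omega)
    have hnext := apply_add_eq_of_window_eq hK (hs K (by omega))
    rw [window_eq_window_iff] at hK ⊢
    intro k hk
    rcases Nat.lt_or_ge (k + 1) n with hk' | hk'
    · simpa [add_assoc, add_comm 1] using hK (k + 1) hk'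
    · obtain rfl : k + 1 = n := by omega
      simpa [add_assoc, add_comm 1] using hnext

theorem eventuallyPeriodic_of_forall_not_isRightSpecial
    (h : ∀ x : List Bool, x.length = n → ¬ IsRightSpecial w x) : EventuallyPeriodic w := by
  obtain ⟨a, b, hab, heq⟩ := Set.Finite.exists_lt_map_eq_of_forall_mem
    (f := fun i => window w i n) (fun _ => length_window) (List.finite_length_eq Bool n)
  refine ⟨a + n, b - a, by omega, fun t ht => ?_⟩
  have hK := window_add_eq_of_window_eq heq (K := t - a - n) fun _ _ => h _ length_window
  have := apply_add_eq_of_window_eq hK (h _ length_window)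
  rwa [show a + (t - a - n) + n = t by omega, show b + (t - a - n) + n = t + (b - a) by omega,
    eq_comm] at this

theorem ncard_rightSpecialFactors_pos (hw : ¬ EventuallyPeriodic w) (n : ℕ) :
    0 < (rightSpecialFactors w n).ncard := by
  refine (Set.ncard_pos (finite_setOf_length_eq_and n _)).2 ?_
  by_contra h
  exact hw (eventuallyPeriodic_of_forall_not_isRightSpecial fun x hx hs => h ⟨x, hx, hs⟩)

theorem le_complexity (hw : ¬ EventuallyPeriodic w) (n : ℕ) : n + 1 ≤ complexity w n := by
  induction n with
  | zero => rw [complexity_zero]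
  | succ n ih =>
    have := ncard_rightSpecialFactors_pos hw n
    rw [complexity_succ]
    omega

theorem not_balancedWord_of_isFactor {s : List Bool}
    (h0 : IsFactor w (false :: (s ++ [false]))) (h1 : IsFactor w (true :: (s ++ [true]))) :
    ¬ BalancedWord w := by
  intro hb
  have := abs_le.1 (hb _ _ h1 h0 (by simp))
  simp at this
  omega

theorem BalancedWord.eq_of_isRightSpecial (hb : BalancedWord w) (hx : IsRightSpecial w x)
    (hy : IsRightSpecial w y) (hl : x.length = y.length) : x = y := by
  by_contra hne
  obtain ⟨p, a, b, s, t, hab, hx', hy'⟩ := List.exists_eq_append_cons_of_ne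
    (x := x.reverse) (y := y.reverse) (by simpa using hl) (by simpa using hne)
  have hxa : IsFactor w (a :: (p.reverse ++ [a])) := (hx.isFactor_append a).of_infix
    ⟨s.reverse, [], by rw [← List.reverse_reverse x, hx']; simp⟩
  have hyb : IsFactor w (b :: (p.reverse ++ [b])) := (hy.isFactor_append b).of_infix
    ⟨t.reverse, [], by rw [← List.reverse_reverse y, hy']; simp⟩
  cases a <;> cases b <;> simp only [ne_eq, not_true_eq_false] at hab
  exacts [not_balancedWord_of_isFactor hxa hyb hb, not_balancedWord_of_isFactor hyb hxa hb]

theorem complexity_of_sturmianWord (hw : SturmianWord w) (n : ℕ) : complexity w n = n + 1 := by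
  induction n with
  | zero => exact complexity_zero
  | succ n ih =>
    have hpos := ncard_rightSpecialFactors_pos hw.2 n
    have hle : (rightSpecialFactors w n).ncard ≤ 1 :=
      (Set.ncard_le_one (finite_setOf_length_eq_and n _)).2 fun x hx y hy =>
        hw.1.eq_of_isRightSpecial hx.2 hy.2 (hx.1.trans hy.1.symm)
    rw [complexity_succ, ih]
    omega

end Complexity

section ComplexityNPlusOne

variable {w : ℕ → Bool} {x y z : List Bool} {i j m : ℕ}

theorem EventuallyPeriodic.exists_complexity_le (h : EventuallyPeriodic w) :
    ∃ C, ∀ n, complexity w n ≤ C := by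
  obtain ⟨N, p, hp, hper⟩ := h
  refine ⟨N + p, fun n => ?_⟩
  have hwin : ∀ i, ∃ j < N + p, window w j n = window w i n := by
    intro i
    induction i using Nat.strong_induction_on with
    | _ i ih =>
      rcases Nat.lt_or_ge i (N + p) with hi | hi
      · exact ⟨i, hi, rfl⟩
      obtain ⟨j, hj, hji⟩ := ih (i - p) (by omega)
      refine ⟨j, hj, hji.trans (window_eq_window_iff.2 fun k _ => ?_)⟩
      rw [← hper _ (by omega : N ≤ i - p + k)]
      congr 1
      omega
  have hsub : factors w n ⊆ ((Finset.range (N + p)).image fun j => window w j n : Set _) := by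
    rintro u ⟨rfl, hu⟩
    obtain ⟨i, hi⟩ := isFactor_iff.1 hu
    obtain ⟨j, hj, hji⟩ := hwin i
    exact Finset.mem_image.2 ⟨j, Finset.mem_range.2 hj, hji.trans hi⟩
  calc complexity w n ≤ ((Finset.range (N + p)).image fun j => window w j n).card := by
        rw [complexity_eq_ncard, ← Set.ncard_coe_finset]
        exact Set.ncard_le_ncard hsub (Finset.finite_toSet _)
    _ ≤ N + p := Finset.card_image_le.trans (by simp)

theorem not_eventuallyPeriodic_of_complexity (hc : ∀ n, complexity w n = n + 1) :
    ¬ EventuallyPeriodic w := fun h => by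
  obtain ⟨C, hC⟩ := h.exists_complexity_le
  have := hC (C + 1)
  rw [hc] at this
  omega

theorem exists_le_window_eq_of_complexity (hc : ∀ n, complexity w n = n + 1)
    (hu : IsFactor w y) (s : ℕ) : ∃ i, s ≤ i ∧ window w i y.length = y := by
  set w' : ℕ → Bool := fun t => w (s + t)
  have hw' : ¬ EventuallyPeriodic w' := by
    rintro ⟨N, p, hp, hper⟩
    refine not_eventuallyPeriodic_of_complexity hc ⟨s + N, p, hp, fun t ht => ?_⟩
    simpa [w', show s + (t - s) = t by omega, ← add_assoc] using hper (t - s) (by omega)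
  have hshift : ∀ i n, window w' i n = window w (s + i) n := by
    simp [w', window, add_assoc]
  have hsub : factors w' y.length ⊆ factors w y.length := by
    rintro v ⟨hv, hf⟩
    obtain ⟨i, hi⟩ := isFactor_iff.1 hf
    exact ⟨hv, isFactor_iff.2 ⟨s + i, hshift i _ ▸ hi⟩⟩
  have heq := Set.eq_of_subset_of_ncard_le hsub
    (by rw [← complexity_eq_ncard, ← complexity_eq_ncard, hc]; exact le_complexity hw' _)
    (finite_setOf_length_eq_and _ _)
  have hy : y ∈ factors w' y.length := by rw [heq]; exact ⟨rfl, hu⟩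
  obtain ⟨i, hi⟩ := isFactor_iff.1 hy.2
  exact ⟨s + i, by omega, hshift i _ ▸ hi⟩

theorem eq_of_isRightSpecial_of_complexity (hc : ∀ n, complexity w n = n + 1)
    (hx : IsRightSpecial w x) (hy : IsRightSpecial w y) (hl : x.length = y.length) : x = y := by
  have hone : (rightSpecialFactors w x.length).ncard = 1 := by
    have := complexity_succ (w := w) (n := x.length)
    rw [hc, hc] at this
    omega
  obtain ⟨r, hr⟩ := Set.ncard_eq_one.1 hone
  have hx' : x ∈ rightSpecialFactors w x.length := ⟨rfl, hx⟩
  have hy' : y ∈ rightSpecialFactors w x.length := ⟨hl.symm, hy⟩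
  rw [hr] at hx' hy'
  exact hx'.trans hy'.symm

theorem sub_le_complexity_of_first_return
    (huniq : ∀ x : List Bool, x.length = m → IsRightSpecial w x → x = z)
    (hi : window w i m = z) (hj : window w j m = z) (hij : i < j)
    (hgap : ∀ t, i < t → t < j → window w t m ≠ z) : j - i ≤ complexity w m := by
  have hne : ∀ s t, s < t → t < j - i → window w (i + s) m ≠ window w (i + t) m := by
    intro s t hst ht heq
    rcases Nat.eq_zero_or_pos s with rfl | hs0
    · exact hgap (i + t) (by omega) (by omega) (heq.symm.trans (by simpa using hi))
    have hK := window_add_eq_of_window_eq heq (K := j - i - t) fun k _ hk =>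
      hgap (i + s + k) (by omega) (by omega) (huniq _ length_window hk)
    rw [show i + t + (j - i - t) = j by omega, hj] at hK
    exact hgap (i + s + (j - i - t)) (by omega) (by omega) hK
  have hinj : Set.InjOn (fun s => window w (i + s) m) (Finset.range (j - i)) := by
    intro s hs t ht heq
    simp only [Finset.coe_range, Set.mem_Iio] at hs ht
    by_contra hst
    rcases Nat.lt_or_gt_of_ne hst with hst | hst
    exacts [hne s t hst ht heq, hne t s hst hs heq.symm]
  calc j - i = ((fun s => window w (i + s) m) '' (Finset.range (j - i) : Set ℕ)).ncard := by
        rw [hinj.ncard_image, Set.ncard_coe_finset, Finset.card_range]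
    _ ≤ complexity w m :=
        Set.ncard_le_ncard (by rintro _ ⟨s, -, rfl⟩; exact ⟨length_window, isFactor_window⟩)
          (finite_setOf_length_eq_and _ _)

theorem apply_sub_one_eq_apply_add_of_palindrome (hz : z.Palindrome) (hi : window w i z.length = z)
    (hj : window w j z.length = z) (hij : i < j) (hji : j ≤ i + z.length + 1) :
    w (j - 1) = w (i + z.length) := by
  rcases Nat.lt_or_ge (j - 1 - i) z.length with hk | hk
  · have hk' : i + z.length - j < z.length := by omega
    rw [show j - 1 = i + (j - 1 - i) by omega, apply_add_eq_getElem hi hk,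
      show i + z.length = j + (i + z.length - j) by omega, apply_add_eq_getElem hj hk']
    rw [List.getElem_of_eq hz.reverse_eq.symm hk, List.getElem_reverse]
    congr 1
    omega
  · congr 1
    omega

theorem window_eq_cons_append_iff {a b : Bool} :
    window w i (z.length + 2) = a :: (z ++ [b]) ↔
      w i = a ∧ window w (i + 1) z.length = z ∧ w (i + 1 + z.length) = b := by
  rw [window_add_two]
  simp

theorem apply_sub_one_eq_of_window_eq (hc : ∀ n, complexity w n = n + 1) (hz : z.Palindrome)
    (hzs : IsRightSpecial w z) {c : Bool}
    (hnext : ∀ i, window w (i + 1) z.length = z → w i = c → w (i + 1 + z.length) = c)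
    {i₀ : ℕ} (h₀ : window w (i₀ + 1) z.length = z) (hc₀ : w i₀ = c) :
    ∀ j, i₀ < j → window w j z.length = z → w (j - 1) = c := by
  classical
  have huniq : ∀ x : List Bool, x.length = z.length → IsRightSpecial w x → x = z :=
    fun x hx hxs => eq_of_isRightSpecial_of_complexity hc hxs hzs hx
  intro j
  induction j using Nat.strong_induction_on with
  | _ j ih =>
    intro hj hjz
    rcases (Nat.succ_le_of_lt hj).eq_or_lt with rfl | hj
    · exact hc₀
    set P : ℕ → Prop := fun t => i₀ < t ∧ window w t z.length = z
    set i := Nat.findGreatest P (j - 1)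
    have hi : P i := Nat.findGreatest_spec (m := i₀ + 1) (by omega) ⟨by omega, h₀⟩
    have hij : i < j := (Nat.findGreatest_le _).trans_lt (by omega)
    have hgap : ∀ t, i < t → t < j → window w t z.length ≠ z := fun t h₁ h₂ ht =>
      Nat.findGreatest_is_greatest (P := P) h₁ (by omega) ⟨by omega, ht⟩
    have hret := sub_le_complexity_of_first_return huniq hi.2 hjz hij hgap
    rw [hc] at hret
    rw [apply_sub_one_eq_apply_add_of_palindrome hz hi.2 hjz hij (by omega)]
    clear_value i
    obtain ⟨i', rfl⟩ : ∃ i', i = i' + 1 := ⟨i - 1, by omega⟩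
    exact hnext i' hi.2 (ih _ hij hi.1 hi.2)

theorem false_of_palindrome_of_not_isFactor (hc : ∀ n, complexity w n = n + 1)
    (hz : z.Palindrome) (c : Bool) (hcc : IsFactor w (c :: (z ++ [c])))
    (hcn : ¬ IsFactor w (c :: (z ++ [!c]))) (hnn : IsFactor w ((!c) :: (z ++ [!c]))) :
    False := by
  have hzs : IsRightSpecial w z := by
    have h₁ := hcc.of_infix (List.suffix_cons c _).isInfix
    have h₂ := hnn.of_infix (List.suffix_cons (!c) _).isInfix
    cases c
    exacts [⟨h₁, h₂⟩, ⟨h₂, h₁⟩]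
  have hnext : ∀ i, window w (i + 1) z.length = z → w i = c → w (i + 1 + z.length) = c := by
    intro i hi hwi
    by_contra hne
    have hframe := window_eq_cons_append_iff.2 ⟨hwi, hi, Bool.eq_not_of_ne hne⟩
    exact hcn (hframe ▸ isFactor_window)
  obtain ⟨i₀, hi₀⟩ := isFactor_iff.1 hcc
  simp only [List.length_cons, List.length_append] at hi₀
  obtain ⟨hwi₀, hzi₀, -⟩ := window_eq_cons_append_iff.1 hi₀
  obtain ⟨k, hk, hkw⟩ := exists_le_window_eq_of_complexity hc hnn i₀
  simp only [List.length_cons, List.length_append] at hkw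
  obtain ⟨hwk, hzk, -⟩ := window_eq_cons_append_iff.1 hkw
  have := apply_sub_one_eq_of_window_eq hc hz hzs hnext hzi₀ hwi₀ (k + 1) (by omega) hzk
  simp [hwk] at this

theorem false_of_palindrome (hc : ∀ n, complexity w n = n + 1) (hz : z.Palindrome)
    (h0 : IsFactor w (false :: (z ++ [false]))) (h1 : IsFactor w (true :: (z ++ [true]))) :
    False := by
  by_cases h10 : IsFactor w (true :: (z ++ [false]))
  · by_cases h01 : IsFactor w (false :: (z ++ [true]))
    · have := eq_of_isRightSpecial_of_complexity hc (x := false :: z) (y := true :: z)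
        ⟨by simpa using h0, by simpa using h01⟩ ⟨by simpa using h10, by simpa using h1⟩ rfl
      simp at this
    · exact false_of_palindrome_of_not_isFactor hc hz false h0 h01 h1
  · exact false_of_palindrome_of_not_isFactor hc hz true h1 h10 h0

theorem exists_palindrome_of_not_balancedWord (h : ¬ BalancedWord w) :
    ∃ z : List Bool, z.Palindrome ∧ IsFactor w (false :: (z ++ [false])) ∧
      IsFactor w (true :: (z ++ [true])) := by
  refine exists_palindrome_of_unbalanced (L := {u | IsFactor w u})
    (fun u hu v hv => IsFactor.of_infix hu hv) ?_
  simp only [BalancedWord, not_forall, not_le] at h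
  obtain ⟨u, v, hu, hv, hl, h⟩ := h
  rcases lt_abs.1 h with h | h
  · exact ⟨u, hu, v, hv, hl, by omega⟩
  · exact ⟨v, hv, u, hu, hl.symm, by omega⟩

end ComplexityNPlusOne

theorem sturmian_iff_complexity (w : ℕ → Bool) :
    SturmianWord w ↔ ∀ n : ℕ, 1 ≤ n → complexity w n = n + 1 := by
  refine ⟨fun hw n _ => complexity_of_sturmianWord hw n, fun hc => ?_⟩
  have hc' : ∀ n, complexity w n = n + 1 := fun n =>
    n.eq_zero_or_pos.elim (fun h => h ▸ complexity_zero) (hc n)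
  refine ⟨?_, not_eventuallyPeriodic_of_complexity hc'⟩
  by_contra hb
  obtain ⟨z, hz, h0, h1⟩ := exists_palindrome_of_not_balancedWord hb
  exact false_of_palindrome hc' hz h0 h1

end StringBricks
end

section
/- A right-infinite binary word w : ℕ → {a,b} is Sturmian (balanced and aperiodic) if and only if there exist an irrational α ∈ (0,1) and a real number ρ such that w equals the lower mechanical word s_{α,ρ} or the upper mechanical word s'_{α,ρ}. (Mechanical words with irrational slope are exactly the cutting words of lines y = mx + c with irrational slope over right-infinite intervals.) -/
/-!
Let `k n` be the least weight of a factor of length `n`. Balance puts every factor of length `n`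
at weight `k n` or `k n + 1`, and splitting a prefix of length `a * b` into blocks in two ways gives
`b * k a ≤ a * (k b + 1)`, so `α = sup (k n / n)` satisfies `k n ≤ n α ≤ k n + 1`: every factor of
length `n` has weight within `1` of `n α`.

If `q α = p` were rational, the factors of length `q` would all weigh at least `p` or all at most
`p` (balance again), so `Φ n = ∑_{r < q} h(w[r, r + n)) - n p`, whose increments are
`h(w[n, n + q)) - p`, would be monotone; it is bounded by `q`, hence eventually constant, so
eventually every factor of length `q` weighs `p` and `w` has period `q`. For irrational `α` the
inequalities are strict, so the discrepancies `h(w[0, n)) - n α` pairwise differ by less than `1`.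
That is exactly the condition for `h(w[0, n))` to be `⌊n α + ρ⌋` for all `n`, or `⌈n α + ρ⌉` for
all `n` (take `ρ` from the supremum of the discrepancies), i.e. for `w` to be mechanical.

Conversely, a mechanical word of slope `α` has pairwise discrepancies below `1`, so factors of
equal length differ in weight by less than `2`, and a period `p` from position `N` on would give
`m * |h(w[N, N + p)) - p α| ≤ 1` for all `m`, making `α` rational.
-/

namespace StringBricks

/-- Lower mechanical word: `s_{α,ρ}(n) = b (= true)` iff
`⌊(n+1)α+ρ⌋ − ⌊nα+ρ⌋ = 1`. -/
noncomputable def lowerMechanical (α ρ : ℝ) : ℕ → Bool :=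
  fun n => decide (⌊((n : ℝ) + 1) * α + ρ⌋ - ⌊(n : ℝ) * α + ρ⌋ = 1)

/-- Upper mechanical word: `s'_{α,ρ}(n) = b (= true)` iff
`⌈(n+1)α+ρ⌉ − ⌈nα+ρ⌉ = 1`. -/
noncomputable def upperMechanical (α ρ : ℝ) : ℕ → Bool :=
  fun n => decide (⌈((n : ℝ) + 1) * α + ρ⌉ - ⌈(n : ℝ) * α + ρ⌉ = 1)

open Finset

theorem exists_floor_or_ceil_eq_iff {ι : Type*} [Nonempty ι] (x : ι → ℝ) (k : ι → ℤ) :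
    (∃ ρ : ℝ, (∀ i, ⌊x i + ρ⌋ = k i) ∨ (∀ i, ⌈x i + ρ⌉ = k i)) ↔
      ∀ i j, |(k i - x i) - (k j - x j)| < 1 := by
  constructor
  · rintro ⟨ρ, h | h⟩ i j <;> rw [abs_lt]
    · have hi := Int.floor_eq_iff.mp (h i)
      have hj := Int.floor_eq_iff.mp (h j)
      constructor <;> linarith
    · have hi := Int.ceil_eq_iff.mp (h i)
      have hj := Int.ceil_eq_iff.mp (h j)
      constructor <;> linarith
  · intro h
    set c : ι → ℝ := fun i => k i - x i
    have hlt : ∀ i j, c i < c j + 1 := fun i j => by linarith [(abs_lt.mp (h i j)).2]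
    obtain ⟨i₀⟩ := ‹Nonempty ι›
    have hbdd : BddAbove (Set.range c) := ⟨c i₀ + 1, by rintro _ ⟨i, rfl⟩; exact (hlt i i₀).le⟩
    set L := ⨆ i, c i
    have hle : ∀ i, c i ≤ L := le_ciSup hbdd
    have hge : ∀ i, L ≤ c i + 1 := fun i => ciSup_le fun j => (hlt j i).le
    -- every `c i` lies in `[L - 1, L]`, and the two endpoints cannot both be attained
    by_cases hL : ∃ i₁, c i₁ = L - 1
    · obtain ⟨i₁, hi₁⟩ := hL
      refine ⟨L - 1, Or.inr fun i => Int.ceil_eq_iff.mpr ⟨?_, ?_⟩⟩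
      · linarith [hlt i i₁]
      · linarith [hge i]
    · push Not at hL
      refine ⟨L, Or.inl fun i => Int.floor_eq_iff.mpr ⟨?_, ?_⟩⟩
      · linarith [hle i]
      · linarith [lt_of_le_of_ne (hge i) (fun h => hL i (by linarith))]

theorem exists_forall_ge_eq_of_monotone_or_antitone {a : ℕ → ℤ} {C : ℤ}
    (ha : Monotone a ∨ Antitone a) (hC : ∀ n, |a n| ≤ C) : ∃ N, ∀ n ≥ N, a n = a N := by
  rcases ha with ha | ha
  · have hbdd : BddAbove (Set.range a) :=
      ⟨C, Set.forall_mem_range.mpr fun n => (abs_le.mp (hC n)).2⟩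
    obtain ⟨N, hN⟩ := Int.csSup_mem (Set.range_nonempty a) hbdd
    exact ⟨N, fun n hn => le_antisymm (hN ▸ le_csSup hbdd ⟨n, rfl⟩) (ha hn)⟩
  · have hbdd : BddBelow (Set.range a) :=
      ⟨-C, Set.forall_mem_range.mpr fun n => (abs_le.mp (hC n)).1⟩
    obtain ⟨N, hN⟩ := Int.csInf_mem (Set.range_nonempty a) hbdd
    exact ⟨N, fun n hn => le_antisymm (ha hn) (hN ▸ csInf_le hbdd ⟨n, rfl⟩)⟩

theorem floor_add_sub_floor_eq_zero_or_one {a : ℝ} (h₀ : 0 ≤ a) (h₁ : a ≤ 1) (x : ℝ) :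
    ⌊x + a⌋ - ⌊x⌋ = 0 ∨ ⌊x + a⌋ - ⌊x⌋ = 1 := by
  have hlo : ⌊x⌋ ≤ ⌊x + a⌋ := Int.floor_mono (by linarith)
  have hhi : ⌊x + a⌋ ≤ ⌊x⌋ + 1 := by
    rw [← Int.floor_add_one]
    exact Int.floor_mono (by linarith)
  omega

theorem ceil_add_sub_ceil_eq_zero_or_one {a : ℝ} (h₀ : 0 ≤ a) (h₁ : a ≤ 1) (x : ℝ) :
    ⌈x + a⌉ - ⌈x⌉ = 0 ∨ ⌈x + a⌉ - ⌈x⌉ = 1 := by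
  have hlo : ⌈x⌉ ≤ ⌈x + a⌉ := Int.ceil_mono (by linarith)
  have hhi : ⌈x + a⌉ ≤ ⌈x⌉ + 1 := by
    rw [← Int.ceil_add_one]
    exact Int.ceil_mono (by linarith)
  omega

theorem eq_decide_of_toNat_eq {b : Bool} {s : ℤ} (h : (b.toNat : ℤ) = s) :
    b = decide (s = 1) := by
  subst h; cases b <;> rfl

theorem toNat_decide_eq {s : ℤ} (h : s = 0 ∨ s = 1) : ((decide (s = 1)).toNat : ℤ) = s := by
  rcases h with rfl | rfl <;> rfl

theorem count_true_ofFn {n : ℕ} (f : Fin n → Bool) :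
    ((List.ofFn f).count true : ℤ) = ∑ j, ((f j).toNat : ℤ) := by
  induction n with
  | zero => simp
  | succ n ih =>
    rw [List.ofFn_succ, List.count_cons, Fin.sum_univ_succ, ← ih]
    cases f 0 <;> simp [add_comm]

def factorWeight (w : ℕ → Bool) (i n : ℕ) : ℤ :=
  ∑ j ∈ range n, ((w (i + j)).toNat : ℤ)

section FactorWeight

variable {w : ℕ → Bool}

@[simp] theorem factorWeight_zero (i : ℕ) : factorWeight w i 0 = 0 := rfl

@[simp] theorem factorWeight_one (i : ℕ) : factorWeight w i 1 = (w i).toNat := by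
  simp [factorWeight]

theorem factorWeight_nonneg (i n : ℕ) : 0 ≤ factorWeight w i n :=
  sum_nonneg fun _ _ => by positivity

theorem factorWeight_le (i n : ℕ) : factorWeight w i n ≤ n := by
  calc factorWeight w i n ≤ ∑ _j ∈ range n, (1 : ℤ) :=
        sum_le_sum fun j _ => by cases w (i + j) <;> simp
    _ = n := by simp

theorem factorWeight_add (i m n : ℕ) :
    factorWeight w i (m + n) = factorWeight w i m + factorWeight w (i + m) n := by
  simp only [factorWeight, sum_range_add, add_assoc]

theorem factorWeight_mul (i m n : ℕ) :
    factorWeight w i (m * n) = ∑ j ∈ range m, factorWeight w (i + j * n) n := by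
  induction m with
  | zero => simp
  | succ m ih => rw [sum_range_succ, ← ih, Nat.succ_mul, factorWeight_add]

theorem toNat_eq_factorWeight_succ_sub (n : ℕ) :
    ((w n).toNat : ℤ) = factorWeight w 0 (n + 1) - factorWeight w 0 n := by
  rw [factorWeight_add, factorWeight_one, zero_add, add_sub_cancel_left]

theorem factorWeight_eq_sub {G : ℕ → ℤ} (hG : ∀ n, ((w n).toNat : ℤ) = G (n + 1) - G n)
    (i n : ℕ) : factorWeight w i n = G (i + n) - G i := by
  simp only [factorWeight, hG]
  exact sum_range_sub (fun j => G (i + j)) n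

theorem apply_add_eq_of_factorWeight_succ_eq {i n : ℕ}
    (h : factorWeight w (i + 1) n = factorWeight w i n) : w (i + n) = w i := by
  have h₁ := factorWeight_add (w := w) i 1 n
  have h₂ := factorWeight_add (w := w) i n 1
  rw [add_comm 1 n, h₂, h, factorWeight_one, factorWeight_one] at h₁
  cases hi : w i <;> cases hin : w (i + n) <;> simp_all

def factor (w : ℕ → Bool) (i n : ℕ) : List Bool :=
  List.ofFn fun j : Fin n => w (i + j)

theorem isFactor_factor (i n : ℕ) : IsFactor w (factor w i n) :=
  ⟨i, fun j => (List.get_ofFn _ j).symm⟩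

theorem IsFactor.exists_factor_eq {u : List Bool} (h : IsFactor w u) :
    ∃ i, factor w i u.length = u := by
  obtain ⟨i, hi⟩ := h
  exact ⟨i, List.ext_get (by simp [factor]) fun j _ hj => by simpa [factor] using hi ⟨j, hj⟩⟩

theorem count_true_factor (i n : ℕ) : ((factor w i n).count true : ℤ) = factorWeight w i n := by
  rw [factor, count_true_ofFn, factorWeight,
    Fin.sum_univ_eq_sum_range (fun j => ((w (i + j)).toNat : ℤ))]

theorem balancedWord_iff :
    BalancedWord w ↔ ∀ i j n, |factorWeight w i n - factorWeight w j n| ≤ 1 := by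
  constructor
  · intro hw i j n
    have := hw _ _ (isFactor_factor i n) (isFactor_factor j n) (by simp [factor])
    rwa [count_true_factor, count_true_factor] at this
  · intro h u v hu hv huv
    obtain ⟨i, hi⟩ := hu.exists_factor_eq
    obtain ⟨j, hj⟩ := hv.exists_factor_eq
    rw [← hi, ← hj, count_true_factor, count_true_factor, huv]
    exact h i j v.length

end FactorWeight

noncomputable def minWeight (w : ℕ → Bool) (n : ℕ) : ℤ :=
  ⨅ i, factorWeight w i n

noncomputable def slope (w : ℕ → Bool) : ℝ :=
  ⨆ n : ℕ, (minWeight w n : ℝ) / n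

section Slope

variable {w : ℕ → Bool}

theorem bddBelow_range_factorWeight (n : ℕ) : BddBelow (Set.range fun i => factorWeight w i n) :=
  ⟨0, by rintro _ ⟨i, rfl⟩; exact factorWeight_nonneg i n⟩

theorem minWeight_le (i n : ℕ) : minWeight w n ≤ factorWeight w i n :=
  ciInf_le (bddBelow_range_factorWeight n) i

theorem exists_factorWeight_eq_minWeight (n : ℕ) : ∃ i, factorWeight w i n = minWeight w n :=
  Int.csInf_mem (Set.range_nonempty _) (bddBelow_range_factorWeight n)

theorem minWeight_nonneg (n : ℕ) : 0 ≤ minWeight w n :=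
  le_ciInf fun i => factorWeight_nonneg i n

@[simp] theorem minWeight_zero : minWeight w 0 = 0 := by
  simp [minWeight]

theorem factorWeight_le_minWeight_add_one (hw : BalancedWord w) (i n : ℕ) :
    factorWeight w i n ≤ minWeight w n + 1 := by
  obtain ⟨i₀, hi₀⟩ := exists_factorWeight_eq_minWeight (w := w) n
  have := abs_le.mp (balancedWord_iff.mp hw i i₀ n)
  omega

theorem mul_minWeight_le (hw : BalancedWord w) (a b : ℕ) :
    b * minWeight w a ≤ a * (minWeight w b + 1) :=
  calc b * minWeight w a = ∑ _j ∈ range b, minWeight w a := by simp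
    _ ≤ ∑ j ∈ range b, factorWeight w (j * a) a := sum_le_sum fun j _ => minWeight_le _ a
    _ = ∑ j ∈ range a, factorWeight w (j * b) b := by
      have hba := factorWeight_mul (w := w) 0 b a
      have hab := factorWeight_mul (w := w) 0 a b
      simp only [zero_add] at hba hab
      rw [← hba, ← hab, mul_comm]
    _ ≤ ∑ _j ∈ range a, (minWeight w b + 1) :=
      sum_le_sum fun j _ => factorWeight_le_minWeight_add_one hw _ b
    _ = a * (minWeight w b + 1) := by simp

theorem minWeight_div_le_one (n : ℕ) : (minWeight w n : ℝ) / n ≤ 1 :=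
  div_le_one_of_le₀ (by exact_mod_cast (minWeight_le 0 n).trans (factorWeight_le 0 n))
    n.cast_nonneg

theorem slope_nonneg : 0 ≤ slope w :=
  Real.iSup_nonneg fun n => div_nonneg (by exact_mod_cast minWeight_nonneg n) n.cast_nonneg

theorem slope_le_one : slope w ≤ 1 :=
  Real.iSup_le minWeight_div_le_one zero_le_one

theorem minWeight_le_mul_slope (n : ℕ) : (minWeight w n : ℝ) ≤ n * slope w := by
  rcases n.eq_zero_or_pos with rfl | hn
  · simp
  rw [← div_le_iff₀' (by positivity)]
  exact le_ciSup (f := fun m : ℕ => (minWeight w m : ℝ) / m)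
    ⟨1, Set.forall_mem_range.mpr minWeight_div_le_one⟩ n

theorem mul_slope_le_minWeight_add_one (hw : BalancedWord w) (n : ℕ) :
    n * slope w ≤ minWeight w n + 1 := by
  rcases n.eq_zero_or_pos with rfl | hn
  · simp
  rw [← le_div_iff₀' (by positivity)]
  refine ciSup_le fun m => ?_
  rcases m.eq_zero_or_pos with rfl | hm
  · simp only [minWeight_zero, Int.cast_zero, zero_div]
    exact div_nonneg (by exact_mod_cast (minWeight_nonneg n).trans (Int.le_add_one le_rfl))
      n.cast_nonneg
  rw [div_le_div_iff₀ (by positivity) (by positivity)]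
  have : (n : ℝ) * minWeight w m ≤ m * (minWeight w n + 1) := by
    exact_mod_cast mul_minWeight_le hw m n
  linarith

theorem abs_factorWeight_sub_mul_slope_le_one (hw : BalancedWord w) (i n : ℕ) :
    |(factorWeight w i n : ℝ) - n * slope w| ≤ 1 := by
  have h₁ : (minWeight w n : ℝ) ≤ factorWeight w i n := by exact_mod_cast minWeight_le i n
  have h₂ : (factorWeight w i n : ℝ) ≤ minWeight w n + 1 := by
    exact_mod_cast factorWeight_le_minWeight_add_one hw i n
  rw [abs_le]
  constructor <;> linarith [minWeight_le_mul_slope (w := w) n, mul_slope_le_minWeight_add_one hw n]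

theorem abs_factorWeight_sub_mul_slope_lt_one (hw : BalancedWord w) (hirr : Irrational (slope w))
    (i n : ℕ) : |(factorWeight w i n : ℝ) - n * slope w| < 1 := by
  rcases n.eq_zero_or_pos with rfl | hn
  · simp
  have hirr' := hirr.natCast_mul hn.ne'
  have h₁ : (minWeight w n : ℝ) < n * slope w :=
    (minWeight_le_mul_slope n).lt_of_ne (hirr'.ne_int _).symm
  have h₂ : n * slope w < minWeight w n + 1 :=
    (mul_slope_le_minWeight_add_one hw n).lt_of_ne
      (by exact_mod_cast hirr'.ne_int (minWeight w n + 1))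
  have h₃ : (minWeight w n : ℝ) ≤ factorWeight w i n := by exact_mod_cast minWeight_le i n
  have h₄ : (factorWeight w i n : ℝ) ≤ minWeight w n + 1 := by
    exact_mod_cast factorWeight_le_minWeight_add_one hw i n
  rw [abs_lt]
  constructor <;> linarith

end Slope

section Periodicity

variable {w : ℕ → Bool}

theorem forall_le_factorWeight_or_forall_factorWeight_le (hw : BalancedWord w) (p : ℤ) (q : ℕ) :
    (∀ n, p ≤ factorWeight w n q) ∨ (∀ n, factorWeight w n q ≤ p) := by
  by_contra! h
  obtain ⟨⟨n, hn⟩, ⟨m, hm⟩⟩ := h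
  have := abs_le.mp (balancedWord_iff.mp hw m n q)
  omega

theorem sum_factorWeight_succ (q n : ℕ) :
    ∑ r ∈ range q, factorWeight w r (n + 1) =
      ∑ r ∈ range q, factorWeight w r n + factorWeight w n q := by
  have hcol : ∑ r ∈ range q, ((w (r + n)).toNat : ℤ) = factorWeight w n q := by
    simp only [factorWeight, add_comm n]
  simp only [factorWeight_add _ n 1, factorWeight_one, sum_add_distrib, hcol]

theorem abs_sum_factorWeight_sub_le (hw : BalancedWord w) {q : ℕ} {p : ℤ}
    (hqp : q * slope w = p) (n : ℕ) : |∑ r ∈ range q, factorWeight w r n - n * p| ≤ q := by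
  have hsum : ((∑ r ∈ range q, factorWeight w r n - n * p : ℤ) : ℝ) =
      ∑ r ∈ range q, ((factorWeight w r n : ℝ) - n * slope w) := by
    simp only [sum_sub_distrib, sum_const, card_range, nsmul_eq_mul]
    push_cast
    rw [← hqp]
    ring
  have : |((∑ r ∈ range q, factorWeight w r n - n * p : ℤ) : ℝ)| ≤ q :=
    calc _ ≤ ∑ r ∈ range q, |(factorWeight w r n : ℝ) - n * slope w| :=
          hsum ▸ abs_sum_le_sum_abs _ _
      _ ≤ ∑ _r ∈ range q, (1 : ℝ) :=
          sum_le_sum fun r _ => abs_factorWeight_sub_mul_slope_le_one hw r n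
      _ = q := by simp
  exact_mod_cast this

theorem eventuallyPeriodic_of_natCast_mul_slope_eq (hw : BalancedWord w) {q : ℕ} {p : ℤ}
    (hq : 0 < q) (hqp : q * slope w = p) : EventuallyPeriodic w := by
  set Φ : ℕ → ℤ := fun n => ∑ r ∈ range q, factorWeight w r n - n * p
  have hΦ_succ : ∀ n, Φ (n + 1) - Φ n = factorWeight w n q - p := fun n => by
    simp only [Φ, sum_factorWeight_succ]
    push_cast
    ring
  obtain ⟨N, hN⟩ := exists_forall_ge_eq_of_monotone_or_antitone (a := Φ) (C := q)
    ((forall_le_factorWeight_or_forall_factorWeight_le hw p q).imp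
      (fun h => monotone_nat_of_le_succ fun n => by linarith [hΦ_succ n, h n])
      (fun h => antitone_nat_of_succ_le fun n => by linarith [hΦ_succ n, h n]))
    (abs_sum_factorWeight_sub_le hw hqp)
  have hp : ∀ n ≥ N, factorWeight w n q = p := fun n hn => by
    linarith [hΦ_succ n, hN n hn, hN (n + 1) (by omega)]
  refine ⟨N, q, hq, fun n hn => apply_add_eq_of_factorWeight_succ_eq ?_⟩
  rw [hp n hn, hp (n + 1) (by omega)]

theorem not_eventuallyPeriodic_of_abs_factorWeight_sub_le {α C : ℝ} (hirr : Irrational α)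
    (hC : ∀ i n, |(factorWeight w i n : ℝ) - n * α| ≤ C) : ¬ EventuallyPeriodic w := by
  rintro ⟨N, p, hp, hper⟩
  have hiter : ∀ j k, w (N + j * p + k) = w (N + k) := by
    intro j k
    induction j with
    | zero => simp
    | succ j ih =>
      rw [show N + (j + 1) * p + k = N + j * p + k + p by ring, hper _ (by omega), ih]
  have hblock : ∀ m : ℕ, factorWeight w N (m * p) = m * factorWeight w N p := by
    intro m
    rw [factorWeight_mul]
    simp only [factorWeight, hiter, sum_const, card_range, nsmul_eq_mul]
  have hbdd : ∀ m : ℕ, m * |(factorWeight w N p : ℝ) - p * α| ≤ C := by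
    intro m
    calc m * |(factorWeight w N p : ℝ) - p * α|
        = |(factorWeight w N (m * p) : ℝ) - ↑(m * p) * α| := by
          rw [hblock, ← Nat.abs_cast, ← abs_mul]
          push_cast
          ring_nf
      _ ≤ C := hC N (m * p)
  have hzero : (factorWeight w N p : ℝ) - p * α = 0 := by
    by_contra hne
    obtain ⟨m, hm⟩ := exists_nat_gt (C / |(factorWeight w N p : ℝ) - p * α|)
    rw [div_lt_iff₀ (abs_pos.mpr hne)] at hm
    linarith [hbdd m]
  exact (hirr.natCast_mul (by omega : p ≠ 0)).ne_int (factorWeight w N p) (by linarith)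

end Periodicity

def discrepancy (w : ℕ → Bool) (α : ℝ) (n : ℕ) : ℝ :=
  factorWeight w 0 n - n * α

section Discrepancy

variable {w : ℕ → Bool} {α ρ : ℝ}

theorem factorWeight_sub_mul_eq (i n : ℕ) :
    (factorWeight w i n : ℝ) - n * α = discrepancy w α (i + n) - discrepancy w α i := by
  simp only [discrepancy, factorWeight_add 0 i n, zero_add]
  push_cast
  ring

theorem sturmianWord_of_abs_discrepancy_sub_lt_one (hirr : Irrational α)
    (h : ∀ m n, |discrepancy w α m - discrepancy w α n| < 1) : SturmianWord w := by
  have hdev : ∀ i n, |(factorWeight w i n : ℝ) - n * α| < 1 := fun i n => by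
    rw [factorWeight_sub_mul_eq]
    exact h _ _
  refine ⟨balancedWord_iff.mpr fun i j n => ?_,
    not_eventuallyPeriodic_of_abs_factorWeight_sub_le hirr fun i n => (hdev i n).le⟩
  have hi := abs_lt.mp (hdev i n)
  have hj := abs_lt.mp (hdev j n)
  have : |(factorWeight w i n : ℝ) - factorWeight w j n| < 1 + 1 :=
    abs_lt.mpr ⟨by linarith, by linarith⟩
  exact Int.lt_add_one_iff.mp (by exact_mod_cast this)

theorem abs_discrepancy_slope_sub_lt_one (hw : BalancedWord w) (hirr : Irrational (slope w))
    (m n : ℕ) : |discrepancy w (slope w) m - discrepancy w (slope w) n| < 1 := by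
  wlog hmn : m ≤ n generalizing m n
  · rw [abs_sub_comm]
    exact this n m (le_of_not_ge hmn)
  obtain ⟨d, rfl⟩ := Nat.exists_eq_add_of_le hmn
  rw [abs_sub_comm, ← factorWeight_sub_mul_eq]
  exact abs_factorWeight_sub_mul_slope_lt_one hw hirr m d

theorem irrational_slope (hw : SturmianWord w) : Irrational (slope w) := by
  rintro ⟨x, hx⟩
  refine hw.2 (eventuallyPeriodic_of_natCast_mul_slope_eq hw.1 x.pos (p := x.num) ?_)
  rw [← hx]
  exact_mod_cast x.den_mul_eq_num

theorem eq_lowerMechanical_of_floor_eq (h : ∀ n : ℕ, ⌊(n : ℝ) * α + ρ⌋ = factorWeight w 0 n) :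
    w = lowerMechanical α ρ := by
  funext n
  rw [lowerMechanical, ← Nat.cast_succ, h, h]
  exact eq_decide_of_toNat_eq (toNat_eq_factorWeight_succ_sub n)

theorem eq_upperMechanical_of_ceil_eq (h : ∀ n : ℕ, ⌈(n : ℝ) * α + ρ⌉ = factorWeight w 0 n) :
    w = upperMechanical α ρ := by
  funext n
  rw [upperMechanical, ← Nat.cast_succ, h, h]
  exact eq_decide_of_toNat_eq (toNat_eq_factorWeight_succ_sub n)

theorem abs_discrepancy_sub_lt_one_of_eq_decide {G : ℕ → ℤ}
    (hstep : ∀ n, G (n + 1) - G n = 0 ∨ G (n + 1) - G n = 1)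
    (hw : ∀ n, w n = decide (G (n + 1) - G n = 1))
    (hG : ∀ m n, |(G m - m * α) - (G n - n * α)| < 1) (m n : ℕ) :
    |discrepancy w α m - discrepancy w α n| < 1 := by
  have hweight := factorWeight_eq_sub (fun n => hw n ▸ toNat_decide_eq (hstep n)) 0
  simp only [discrepancy, hweight, zero_add]
  push_cast
  convert hG m n using 2
  ring

theorem abs_discrepancy_lowerMechanical_sub_lt_one (h₀ : 0 ≤ α) (h₁ : α ≤ 1) (m n : ℕ) :
    |discrepancy (lowerMechanical α ρ) α m - discrepancy (lowerMechanical α ρ) α n| < 1 := by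
  refine abs_discrepancy_sub_lt_one_of_eq_decide (G := fun n => ⌊(n : ℝ) * α + ρ⌋) (fun n => ?_)
    (fun n => by simp [lowerMechanical])
    ((exists_floor_or_ceil_eq_iff (fun n : ℕ => n * α) _).mp ⟨ρ, Or.inl fun _ => rfl⟩) m n
  rw [Nat.cast_succ, add_one_mul, add_right_comm]
  exact floor_add_sub_floor_eq_zero_or_one h₀ h₁ _

theorem abs_discrepancy_upperMechanical_sub_lt_one (h₀ : 0 ≤ α) (h₁ : α ≤ 1) (m n : ℕ) :
    |discrepancy (upperMechanical α ρ) α m - discrepancy (upperMechanical α ρ) α n| < 1 := by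
  refine abs_discrepancy_sub_lt_one_of_eq_decide (G := fun n => ⌈(n : ℝ) * α + ρ⌉) (fun n => ?_)
    (fun n => by simp [upperMechanical])
    ((exists_floor_or_ceil_eq_iff (fun n : ℕ => n * α) _).mp ⟨ρ, Or.inr fun _ => rfl⟩) m n
  rw [Nat.cast_succ, add_one_mul, add_right_comm]
  exact ceil_add_sub_ceil_eq_zero_or_one h₀ h₁ _

end Discrepancy

theorem sturmian_iff_mechanical (w : ℕ → Bool) :
    SturmianWord w ↔
      ∃ α ρ : ℝ, Irrational α ∧ 0 < α ∧ α < 1 ∧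
        (w = lowerMechanical α ρ ∨ w = upperMechanical α ρ) := by
  constructor
  · intro hw
    have hirr := irrational_slope hw
    obtain ⟨ρ, hρ⟩ :=
      (exists_floor_or_ceil_eq_iff (fun n : ℕ => n * slope w) (factorWeight w 0)).mpr
        (abs_discrepancy_slope_sub_lt_one hw.1 hirr)
    exact ⟨slope w, ρ, hirr, slope_nonneg.lt_of_ne' hirr.ne_zero, slope_le_one.lt_of_ne hirr.ne_one,
      hρ.imp eq_lowerMechanical_of_floor_eq eq_upperMechanical_of_ceil_eq⟩
  · rintro ⟨α, ρ, hirr, h₀, h₁, rfl | rfl⟩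
    · exact sturmianWord_of_abs_discrepancy_sub_lt_one hirr
        (abs_discrepancy_lowerMechanical_sub_lt_one h₀.le h₁.le)
    · exact sturmianWord_of_abs_discrepancy_sub_lt_one hirr
        (abs_discrepancy_upperMechanical_sub_lt_one h₀.le h₁.le)

end StringBricks
end
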